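/- Let σ > 0, ω ∈ ℝ with ω ∉ πℚ, and let ψ_ℓ(k) := exp(ikℓω − (σ²/2)ℓk²) for ℓ ∈ ℕ₊, k ∈ ℤ. Let {z_k}_{k∈ℤ} be a bounded sequence of complex numbers. Then for every ℓ ≥ 1 the family {ψ_ℓ(k) z_k}_{k∈ℤ} is absolutely summable, and if ∑_{k∈ℤ} ψ_ℓ(k) z_k = 0 for all ℓ ≥ 1, then z_k = 0 for every k ∈ ℤ. -/

import Mathlib

/-!
Put `w k = ψ₁(k)`. Then `ψ_ℓ(k) = w k ^ ℓ`, and `‖w k‖ = exp (-σ²k²/2)` is summable and strictly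
decreasing in `|k|`, so the hypothesis says that all power sums `∑ₖ w k ^ ℓ z k`, `ℓ ≥ 1`, vanish.
Argue by induction on `|k|`, assuming `z` vanishes on `|j| < |k|`. Among the remaining terms only
`j = ±k` have the maximal modulus `‖w k‖`, and `w (-k) ≠ w k` because `ω ∉ πℚ`. Weighting the
`j`-th term by `w j - w (-k)` removes the term `j = -k`; after division by `w k ^ ℓ` every other
term except `j = k` tends to `0` as `ℓ → ∞`, so dominated convergence gives
`(w k - w (-k)) z k = 0`.
-/

open Real

noncomputable section

/-- `ψ_ℓ(k) = exp(ikℓω − (σ²/2)ℓk²)`, the characteristic function at `k` of a Gaussian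
with mean `ℓω` and variance `ℓσ²`. -/
def psiCF (ω σ : ℝ) (ℓ : ℕ) (k : ℤ) : ℂ :=
  Complex.exp (Complex.I * (k : ℂ) * (ℓ : ℂ) * (ω : ℂ) -
    ((σ ^ 2 : ℝ) : ℂ) / 2 * (ℓ : ℂ) * (k : ℂ) ^ 2)

open Filter Topology

section PowerSums

variable {ι : Type*} {w z : ι → ℂ} {M : ℝ}

theorem summable_pow_mul_of_norm_le_one (hz : ∀ j, ‖z j‖ ≤ M) (hw : Summable fun j => ‖w j‖)
    (hw₁ : ∀ j, ‖w j‖ ≤ 1) {ℓ : ℕ} (hℓ : ℓ ≠ 0) : Summable fun j => w j ^ ℓ * z j := by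
  refine (hw.mul_right M).of_norm_bounded fun j => ?_
  rw [norm_mul, norm_pow]
  exact mul_le_mul (pow_le_of_le_one (norm_nonneg _) (hw₁ j) hℓ) (hz j) (norm_nonneg _)
    (norm_nonneg _)

theorem norm_div_pow_mul_sub_le {a μ ν : ℂ} (ha : ‖a‖ ≤ ‖μ‖) (hν : ‖ν‖ ≤ ‖μ‖) {ℓ : ℕ}
    (hℓ : ℓ ≠ 0) : ‖(a / μ) ^ ℓ * (a - ν)‖ ≤ 2 * ‖a‖ := by
  rcases eq_or_ne μ 0 with rfl | hμ
  · simp_all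
  have hq : ‖a / μ‖ ≤ 1 := by
    rw [norm_div]
    exact div_le_one_of_le₀ ha (norm_nonneg _)
  calc ‖(a / μ) ^ ℓ * (a - ν)‖ ≤ ‖a / μ‖ * (2 * ‖μ‖) := by
        rw [norm_mul, norm_pow]
        gcongr
        · exact pow_le_of_le_one (norm_nonneg _) hq hℓ
        · exact (norm_sub_le _ _).trans (by linarith)
    _ = 2 * ‖a‖ := by rw [norm_div]; field_simp

theorem sub_mul_eq_zero_of_tsum_pow_mul_eq_zero (hz : ∀ j, ‖z j‖ ≤ M)
    (hw : Summable fun j => ‖w j‖) (hs : ∀ ℓ : ℕ, 1 ≤ ℓ → Summable fun j => w j ^ ℓ * z j)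
    (h₀ : ∀ ℓ : ℕ, 1 ≤ ℓ → ∑' j, w j ^ ℓ * z j = 0) {m : ι} {ν : ℂ} (hν : ‖ν‖ ≤ ‖w m‖)
    (hdom : ∀ j, j ≠ m → w j ≠ ν → z j ≠ 0 → ‖w j‖ < ‖w m‖) :
    (w m - ν) * z m = 0 := by
  classical
  rcases eq_or_ne (w m) 0 with hμ | hμ
  · rw [hμ, norm_zero, norm_le_zero_iff] at hν
    rw [hμ, hν, sub_zero, zero_mul]
  set F : ℕ → ι → ℂ := fun ℓ j => (w j / w m) ^ ℓ * (w j - ν) * z j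
  have hF : ∀ ℓ, 1 ≤ ℓ → ∑' j, F ℓ j = 0 := by
    intro ℓ hℓ
    have hF_eq : F ℓ = fun j => (w m ^ ℓ)⁻¹ * (w j ^ (ℓ + 1) * z j - ν * (w j ^ ℓ * z j)) := by
      ext j
      simp only [F, div_pow]
      ring
    rw [hF_eq, tsum_mul_left, Summable.tsum_sub (hs _ (by omega)) ((hs ℓ hℓ).mul_left ν),
      tsum_mul_left, h₀ _ (by omega), h₀ ℓ hℓ, mul_zero, sub_zero, mul_zero]
  have hlim : ∀ j, Tendsto (F · j) atTop (𝓝 (if j = m then (w m - ν) * z m else 0)) := by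
    intro j
    by_cases hjm : j = m
    · rw [hjm, if_pos rfl]
      simp only [F, div_self hμ, one_pow, one_mul]
      exact tendsto_const_nhds
    rw [if_neg hjm]
    by_cases hj : w j = ν ∨ z j = 0
    · rcases hj with h | h <;> simp [F, h]
    push Not at hj
    have hlt : ‖w j / w m‖ < 1 := by
      rw [norm_div]
      exact (div_lt_one (norm_pos_iff.2 hμ)).2 (hdom j hjm hj.1 hj.2)
    simpa using ((tendsto_pow_atTop_nhds_zero_of_norm_lt_one hlt).mul_const (w j - ν)).mul_const
      (z j)
  have hM : 0 ≤ M := (norm_nonneg _).trans (hz m)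
  have hbound : ∀ᶠ ℓ in atTop, ∀ j, ‖F ℓ j‖ ≤ 2 * M * ‖w j‖ := by
    filter_upwards [eventually_ge_atTop 1] with ℓ hℓ j
    by_cases hzj : z j = 0
    · simp only [F, hzj, mul_zero, norm_zero]
      positivity
    have hle : ‖w j‖ ≤ ‖w m‖ := by
      by_cases hjm : j = m
      · rw [hjm]
      by_cases hjν : w j = ν
      · rwa [hjν]
      exact (hdom j hjm hjν hzj).le
    calc ‖F ℓ j‖ ≤ 2 * ‖w j‖ * M := by
          rw [norm_mul]
          exact mul_le_mul (norm_div_pow_mul_sub_le hle hν (by omega)) (hz j) (norm_nonneg _)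
            (by positivity)
      _ = 2 * M * ‖w j‖ := by ring
  have hconv := tendsto_tsum_of_dominated_convergence (hw.mul_left (2 * M)) hlim hbound
  rw [tsum_ite_eq] at hconv
  refine tendsto_nhds_unique hconv (tendsto_const_nhds.congr' ?_)
  filter_upwards [eventually_ge_atTop 1] with ℓ hℓ using (hF ℓ hℓ).symm

end PowerSums

theorem psiCF_eq_pow (ω σ : ℝ) (ℓ : ℕ) (k : ℤ) : psiCF ω σ ℓ k = psiCF ω σ 1 k ^ ℓ := by
  rw [psiCF, psiCF, ← Complex.exp_nat_mul]
  congr 1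
  push_cast
  ring

theorem psiCF_one_eq_jacobiTheta₂_term (ω σ : ℝ) (k : ℤ) :
    psiCF ω σ 1 k =
      jacobiTheta₂_term k (ω / (2 * π)) (((σ ^ 2 / (2 * π) : ℝ) : ℂ) * Complex.I) := by
  have hπ : (π : ℂ) ≠ 0 := Complex.ofReal_ne_zero.2 pi_ne_zero
  rw [psiCF, jacobiTheta₂_term]
  congr 1
  push_cast
  field_simp
  linear_combination (-σ ^ 2 * k ^ 2 : ℂ) * Complex.I_sq

theorem norm_psiCF_one (ω σ : ℝ) (k : ℤ) :
    ‖psiCF ω σ 1 k‖ = Real.exp (-(σ ^ 2 / 2 * k ^ 2)) := by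
  rw [psiCF, Complex.norm_exp]
  congr 1
  simp [pow_two]

theorem psiCF_one_zero (ω σ : ℝ) : psiCF ω σ 1 0 = 1 := by simp [psiCF]

theorem norm_psiCF_one_le_one (ω σ : ℝ) (k : ℤ) : ‖psiCF ω σ 1 k‖ ≤ 1 := by
  rw [norm_psiCF_one, Real.exp_le_one_iff, neg_nonpos]
  positivity

theorem norm_psiCF_one_neg (ω σ : ℝ) (k : ℤ) : ‖psiCF ω σ 1 (-k)‖ = ‖psiCF ω σ 1 k‖ := by
  simp [norm_psiCF_one]

theorem summable_norm_psiCF_one (ω : ℝ) {σ : ℝ} (hσ : σ ≠ 0) :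
    Summable fun k : ℤ => ‖psiCF ω σ 1 k‖ := by
  simp only [summable_norm_iff, psiCF_one_eq_jacobiTheta₂_term]
  refine (summable_jacobiTheta₂_term_iff _ _).2 ?_
  rw [Complex.im_ofReal_mul, Complex.I_im, mul_one]
  positivity

theorem norm_psiCF_one_lt (ω : ℝ) {σ : ℝ} (hσ : σ ≠ 0) {j k : ℤ} (h : k.natAbs < j.natAbs) :
    ‖psiCF ω σ 1 j‖ < ‖psiCF ω σ 1 k‖ := by
  rw [norm_psiCF_one, norm_psiCF_one, Real.exp_lt_exp, neg_lt_neg_iff]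
  have hkj : (k : ℝ) ^ 2 < (j : ℝ) ^ 2 := by exact_mod_cast Int.natAbs_lt_iff_sq_lt.1 h
  gcongr

theorem psiCF_one_neg_ne {ω : ℝ} (hω : ∀ q : ℚ, ω ≠ π * (q : ℝ)) (σ : ℝ) {k : ℤ} (hk : k ≠ 0) :
    psiCF ω σ 1 (-k) ≠ psiCF ω σ 1 k := by
  intro h
  obtain ⟨n, hn⟩ := Complex.exp_eq_exp_iff_exists_int.1 h
  have hn' : ((2 * k * ω + 2 * π * n : ℝ) : ℂ) * Complex.I = 0 := by
    push_cast at hn ⊢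
    linear_combination -hn
  have hn'' : 2 * k * ω + 2 * π * n = 0 := by
    exact_mod_cast (mul_eq_zero.1 hn').resolve_right Complex.I_ne_zero
  apply hω (-n / k)
  push_cast
  field_simp
  linarith

/-- Lemma: for a bounded sequence `{z_k}` the family `{ψ_ℓ(k) z_k}` is absolutely
summable for every `ℓ ≥ 1`, and if all its sums vanish then `z ≡ 0`. -/
theorem psi_determines_coefficients
    (σ ω : ℝ) (hσ : 0 < σ) (hω : ∀ q : ℚ, ω ≠ π * (q : ℝ))
    (z : ℤ → ℂ) (hz : ∃ M : ℝ, ∀ k : ℤ, ‖z k‖ ≤ M) :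
    (∀ ℓ : ℕ, 1 ≤ ℓ → Summable (fun k : ℤ => psiCF ω σ ℓ k * z k)) ∧
    ((∀ ℓ : ℕ, 1 ≤ ℓ → ∑' k : ℤ, psiCF ω σ ℓ k * z k = 0) → ∀ k : ℤ, z k = 0) := by
  obtain ⟨M, hM⟩ := hz
  have hw := summable_norm_psiCF_one ω hσ.ne'
  have hpow : ∀ ℓ : ℕ, (fun k : ℤ => psiCF ω σ ℓ k * z k) = fun k => psiCF ω σ 1 k ^ ℓ * z k :=
    fun ℓ => funext fun k => by rw [psiCF_eq_pow]
  simp only [hpow]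
  have hs : ∀ ℓ : ℕ, 1 ≤ ℓ → Summable fun k : ℤ => psiCF ω σ 1 k ^ ℓ * z k := fun ℓ hℓ =>
    summable_pow_mul_of_norm_le_one hM hw (norm_psiCF_one_le_one ω σ) (by omega)
  refine ⟨hs, fun h₀ k => ?_⟩
  induction h : k.natAbs using Nat.strong_induction_on generalizing k with
  | _ n ih =>
    have hlow : ∀ j : ℤ, j.natAbs < k.natAbs → z j = 0 := fun j hj => ih _ (h ▸ hj) j rfl
    rcases eq_or_ne k 0 with rfl | hk
    · have h0 := sub_mul_eq_zero_of_tsum_pow_mul_eq_zero hM hw hs h₀ (m := 0) (ν := 0)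
        (by simp) fun j hj _ _ => norm_psiCF_one_lt ω hσ.ne' (by omega)
      simpa [psiCF_one_zero] using h0
    have hdom : ∀ j, j ≠ k → psiCF ω σ 1 j ≠ psiCF ω σ 1 (-k) → z j ≠ 0 →
        ‖psiCF ω σ 1 j‖ < ‖psiCF ω σ 1 k‖ := fun j hjk hjν hzj => by
      have hj : j ≠ -k := fun hj => hjν (hj ▸ rfl)
      have hkj := mt (hlow j) hzj
      exact norm_psiCF_one_lt ω hσ.ne' (by omega)
    have hk' := sub_mul_eq_zero_of_tsum_pow_mul_eq_zero hM hw hs h₀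
      (norm_psiCF_one_neg ω σ k).le hdom
    exact (mul_eq_zero.1 hk').resolve_left (sub_ne_zero.2 (psiCF_one_neg_ne hω σ hk).symm)
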